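/- arXiv:1811.00887 — 5 statements merged into one kernel-verified Lean document; each statement's English description precedes it below -/
import Mathlib

section
/- Every convex body K in R^d contains a Euclidean ball of radius delta(K)/(2d(d+1)), where delta(K) is the minimum width of K. -/
/-!
Cut `K` in every direction `v` by the half-space lying at depth `w_v / (d + 1)` below the supporting
hyperplane, where `w_v` is the width of `K` along `v`. Any `d + 1` of these cuts contain the centroid
of the corresponding minimizing points of `K`, so by Helly's theorem all cuts share a point `c`.
Every supporting hyperplane of `K` is then at distance at least `δ(K) / (d + 1)` from `c`, and
separation shows that the ball of that radius around `c` lies in `K`.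
-/

noncomputable def minWidth {d : ℕ} (K : Set (EuclideanSpace ℝ (Fin d))) : ℝ :=
  ⨅ v : {v : EuclideanSpace ℝ (Fin d) // ‖v‖ = 1},
    ((⨆ x : K, (inner ℝ v.1 x.1 : ℝ)) - ⨅ x : K, (inner ℝ v.1 x.1 : ℝ))

open Module Metric Finset RealInnerProductSpace

section SupportFunction

variable {E : Type*} [NormedAddCommGroup E] [InnerProductSpace ℝ E] {K : Set E}

noncomputable def supportFn (K : Set E) (v : E) : ℝ := ⨆ x : K, ⟪v, x⟫

noncomputable def widthAlong (K : Set E) (v : E) : ℝ := supportFn K v - ⨅ x : K, ⟪v, x⟫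

lemma inner_le_supportFn (hK : IsCompact K) (v : E) {x : E} (hx : x ∈ K) :
    ⟪v, x⟫ ≤ supportFn K v := by
  refine le_ciSup (f := fun y : K => ⟪v, (y : E)⟫) ?_ ⟨x, hx⟩
  rw [← Set.image_eq_range]
  exact (hK.image (continuous_const.inner continuous_id)).bddAbove

lemma iInf_inner_le (hK : IsCompact K) (v : E) {x : E} (hx : x ∈ K) :
    ⨅ y : K, ⟪v, y⟫ ≤ ⟪v, x⟫ := by
  refine ciInf_le (f := fun y : K => ⟪v, (y : E)⟫) ?_ ⟨x, hx⟩
  rw [← Set.image_eq_range]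
  exact (hK.image (continuous_const.inner continuous_id)).bddBelow

lemma widthAlong_nonneg (hK : IsCompact K) (hne : K.Nonempty) (v : E) : 0 ≤ widthAlong K v := by
  obtain ⟨x, hx⟩ := hne
  exact sub_nonneg.2 ((iInf_inner_le hK v hx).trans (inner_le_supportFn hK v hx))

lemma exists_mem_inner_le_iInf (hK : IsCompact K) (hne : K.Nonempty) (v : E) :
    ∃ x ∈ K, ⟪v, x⟫ ≤ ⨅ y : K, ⟪v, y⟫ := by
  obtain ⟨x, hxK, hxmin⟩ :=
    hK.exists_isMinOn hne (continuous_const.inner continuous_id : Continuous (⟪v, ·⟫)).continuousOn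
  have : Nonempty K := hne.to_subtype
  exact ⟨x, hxK, le_ciInf fun y => hxmin y.2⟩

lemma inner_centroid_le (hK : IsCompact K) {I : Finset E} {x : E → E}
    (hxK : ∀ u ∈ I, x u ∈ K) (hxmin : ∀ u ∈ I, ⟪u, x u⟫ ≤ ⨅ y : K, ⟪u, y⟫) {v : E} (hv : v ∈ I) :
    ⟪v, (#I : ℝ)⁻¹ • ∑ u ∈ I, x u⟫ ≤ supportFn K v - widthAlong K v / #I := by
  classical
  have hI : (0 : ℝ) < #I := by exact_mod_cast card_pos.2 ⟨v, hv⟩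
  have hrest : ∑ u ∈ I.erase v, ⟪v, x u⟫ ≤ ((#I : ℝ) - 1) * supportFn K v := by
    have := sum_le_card_nsmul (I.erase v) (fun u => ⟪v, x u⟫) (supportFn K v)
      fun u hu => inner_le_supportFn hK v (hxK u (mem_of_mem_erase hu))
    rwa [card_erase_of_mem hv, nsmul_eq_mul, Nat.cast_pred (card_pos.2 ⟨v, hv⟩)] at this
  have hsum : ∑ u ∈ I, ⟪v, x u⟫ ≤ #I * supportFn K v - widthAlong K v := by
    rw [← add_sum_erase I _ hv, widthAlong]
    linarith [hxmin v hv]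
  rw [real_inner_smul_right, inner_sum, sub_div' hI.ne', inv_mul_eq_div]
  exact div_le_div_of_nonneg_right (by linarith) hI.le

lemma exists_forall_inner_le_supportFn_sub_widthAlong [FiniteDimensional ℝ E]
    (hK : IsCompact K) (hconv : Convex ℝ K) (hne : K.Nonempty) :
    ∃ c, ∀ v, ⟪v, c⟫ ≤ supportFn K v - widthAlong K v / (finrank ℝ E + 1) := by
  set F : E → Set E :=
    fun v => K ∩ {c | ⟪v, c⟫ ≤ supportFn K v - widthAlong K v / (finrank ℝ E + 1)}
  have hFconv (v : E) : Convex ℝ (F v) :=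
    hconv.inter (convex_halfSpace_le (innerₛₗ ℝ v).isLinear _)
  have hFcomp (v : E) : IsCompact (F v) :=
    hK.inter_right (isClosed_le (continuous_const.inner continuous_id) continuous_const)
  choose x hxK hxmin using exists_mem_inner_le_iInf hK hne
  suffices ∀ I : Finset E, #I ≤ finrank ℝ E + 1 → (⋂ v ∈ I, F v).Nonempty by
    obtain ⟨c, hc⟩ := Convex.helly_theorem_compact' hFconv hFcomp this
    exact ⟨c, fun v => (Set.mem_iInter.1 hc v).2⟩
  intro I hcard
  rcases I.eq_empty_or_nonempty with rfl | ⟨v₀, hv₀⟩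
  · simp
  have hI : (0 : ℝ) < #I := by exact_mod_cast card_pos.2 ⟨v₀, hv₀⟩
  refine ⟨(#I : ℝ)⁻¹ • ∑ u ∈ I, x u, Set.mem_iInter₂.2 fun v hv => ⟨?_, ?_⟩⟩
  · rw [smul_sum]
    refine hconv.sum_mem (fun _ _ => by positivity) ?_ fun u _ => hxK u
    rw [sum_const, nsmul_eq_mul, mul_inv_cancel₀ hI.ne']
  · refine (inner_centroid_le hK (fun u _ => hxK u) (fun u _ => hxmin u) hv).trans ?_
    gcongr
    · exact widthAlong_nonneg hK hne v
    · exact_mod_cast hcard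

lemma exists_unit_inner_lt_of_notMem [CompleteSpace E] (hconv : Convex ℝ K)
    (hclosed : IsClosed K) (hne : K.Nonempty) {y : E} (hy : y ∉ K) :
    ∃ u : E, ‖u‖ = 1 ∧ ∃ s, (∀ x ∈ K, ⟪u, x⟫ < s) ∧ s < ⟪u, y⟫ := by
  obtain ⟨f, s, hfK, hfy⟩ := geometric_hahn_banach_closed_point hconv hclosed hy
  set v := (InnerProductSpace.toDual ℝ E).symm f
  have hv (x : E) : ⟪v, x⟫ = f x := InnerProductSpace.toDual_symm_apply
  have hv0 : 0 < ‖v‖ := by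
    obtain ⟨x, hx⟩ := hne
    refine norm_pos_iff.2 fun h => ?_
    have hx' := hfK x hx
    rw [← hv, h, inner_zero_left] at hx' hfy
    linarith
  refine ⟨‖v‖⁻¹ • v, by rw [norm_smul, norm_inv, norm_norm, inv_mul_cancel₀ hv0.ne'],
    ‖v‖⁻¹ * s, fun x hx => ?_, ?_⟩
  all_goals rw [real_inner_smul_left, hv]; gcongr
  exact hfK x hx

lemma closedBall_subset_of_inner_add_le_supportFn [CompleteSpace E] (hconv : Convex ℝ K)
    (hclosed : IsClosed K) (hne : K.Nonempty) {c : E} {r : ℝ}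
    (h : ∀ u : E, ‖u‖ = 1 → ⟪u, c⟫ + r ≤ supportFn K u) :
    closedBall c r ⊆ K := by
  intro y hy
  by_contra hyK
  obtain ⟨u, hu, s, huK, huy⟩ := exists_unit_inner_lt_of_notMem hconv hclosed hne hyK
  have : Nonempty K := hne.to_subtype
  have hsupp : supportFn K u ≤ s := ciSup_le fun x => (huK x x.2).le
  have hdist : ⟪u, y - c⟫ ≤ r := calc
    ⟪u, y - c⟫ ≤ ‖u‖ * ‖y - c‖ := real_inner_le_norm _ _
    _ ≤ r := by rw [hu, one_mul, ← dist_eq_norm]; exact mem_closedBall.1 hy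
  rw [inner_sub_right] at hdist
  linarith [h u hu]

end SupportFunction

section MinWidth

variable {d : ℕ} {K : Set (EuclideanSpace ℝ (Fin d))}

lemma minWidth_eq_iInf_widthAlong :
    minWidth K = ⨅ u : {u : EuclideanSpace ℝ (Fin d) // ‖u‖ = 1}, widthAlong K u := rfl

lemma minWidth_nonneg (hK : IsCompact K) (hne : K.Nonempty) : 0 ≤ minWidth K :=
  Real.iInf_nonneg fun u => widthAlong_nonneg hK hne u.1

lemma minWidth_le_widthAlong (hK : IsCompact K) (hne : K.Nonempty)
    {u : EuclideanSpace ℝ (Fin d)} (hu : ‖u‖ = 1) : minWidth K ≤ widthAlong K u := by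
  rw [minWidth_eq_iInf_widthAlong]
  refine ciInf_le ⟨0, ?_⟩ (⟨u, hu⟩ : {u : EuclideanSpace ℝ (Fin d) // ‖u‖ = 1})
  rintro _ ⟨v, rfl⟩
  exact widthAlong_nonneg hK hne v.1

end MinWidth

theorem stmt_1_general (d : ℕ)
    (K : Set (EuclideanSpace ℝ (Fin d)))
    (hKcomp : IsCompact K) (hKconv : Convex ℝ K) (hKint : (interior K).Nonempty) :
    ∃ x : EuclideanSpace ℝ (Fin d),
      Metric.closedBall x (minWidth K / (2 * d * (d + 1))) ⊆ K := by
  have hne : K.Nonempty := hKint.mono interior_subset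
  obtain ⟨c, hc⟩ := exists_forall_inner_le_supportFn_sub_widthAlong hKcomp hKconv hne
  refine ⟨c, closedBall_subset_of_inner_add_le_supportFn hKconv hKcomp.isClosed hne fun u hu => ?_⟩
  have hradius : minWidth K / (2 * d * (d + 1)) ≤ widthAlong K u / (d + 1) := calc
    minWidth K / (2 * d * (d + 1)) ≤ minWidth K / (d + 1) := by
      rcases Nat.eq_zero_or_pos d with rfl | hd
      · -- the left-hand side is `minWidth K / 0 = 0`
        simpa using div_nonneg (minWidth_nonneg hKcomp hne) zero_le_one
      · have : (1 : ℝ) ≤ d := by exact_mod_cast hd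
        gcongr
        · exact minWidth_nonneg hKcomp hne
        · nlinarith
    _ ≤ widthAlong K u / (d + 1) := by gcongr; exact minWidth_le_widthAlong hKcomp hne hu
  have hcu := hc u
  rw [finrank_euclideanSpace_fin] at hcu
  linarith

theorem stmt_1 (d : ℕ) (hd : 1 ≤ d)
    (K : Set (EuclideanSpace ℝ (Fin d)))
    (hKcomp : IsCompact K) (hKconv : Convex ℝ K) (hKint : (interior K).Nonempty) :
    ∃ x : EuclideanSpace ℝ (Fin d),
      Metric.closedBall x (minWidth K / (2 * d * (d + 1))) ⊆ K :=
  stmt_1_general d K hKcomp hKconv hKint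
end

section
/- Let z in R^d, R > r > 0, and let Omega_T be the set of endpoints o_T of sequences (o_1,...,o_T) with o_t in K_t ∩ B(z,R) for each t, o_1 in B(z,R), and total movement sum_{t} ||o_t - o_{t+1}|| <= r (where K_1,...,K_T are convex sets). Suppose Omega_T is nonempty and Omega_T is contained in the open ball B°(z, R - r). Then every sequence (o_t) with o_t in K_t and total movement <= r (starting from a point in B(z,R)) stays inside B(z,R) for all t, and hence ends in Omega_T. -/
/-!
Fix a path `p` witnessing `Ω_T ≠ ∅` and let `o` be any selector path of movement at most `r`.
The selector paths of movement at most `r` form a convex, hence connected, set containing `p`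
and `o`. Along it, staying in the closed ball `B(z, R)` forces staying in the open ball: such a
path ends in `Ω_T ⊆ B°(z, R - r)` and every point lies within movement `r` of the endpoint.
So the paths inside `B(z, R)` form a nonempty clopen part of a connected set, i.e. all of it.
-/

open Finset

theorem IsPreconnected.subset_of_inter_closed_subset {X : Type*} [TopologicalSpace X]
    {s u c : Set X} (hs : IsPreconnected s) (hu : IsOpen u) (hc : IsClosed c) (huc : u ⊆ c)
    (hsc : s ∩ c ⊆ u) (hne : (s ∩ c).Nonempty) : s ⊆ u := by
  refine hs.subset_of_closure_inter_subset hu ?_ ?_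
  · obtain ⟨x, hxs, hxc⟩ := hne
    exact ⟨x, hxs, hsc ⟨hxs, hxc⟩⟩
  · rintro x ⟨hxu, hxs⟩
    exact hsc ⟨hxs, closure_minimal huc hc hxu⟩

section Movement

variable {E : Type*} [SeminormedAddCommGroup E]

theorem mem_ball_of_sum_norm_sub_le {o : ℕ → E} {T : ℕ} {z : E} {R r : ℝ}
    (hmov : ∑ t ∈ Ico 1 T, ‖o t - o (t + 1)‖ ≤ r) (hT : o T ∈ Metric.ball z (R - r)) :
    ∀ t ∈ Icc 1 T, o t ∈ Metric.ball z R := by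
  intro t ht
  obtain ⟨h1t, htT⟩ := mem_Icc.mp ht
  have hchain : dist (o t) (o T) ≤ r :=
    calc dist (o t) (o T) ≤ ∑ s ∈ Ico t T, dist (o s) (o (s + 1)) := dist_le_Ico_sum_dist o htT
      _ ≤ ∑ s ∈ Ico 1 T, ‖o s - o (s + 1)‖ := by
        simp only [dist_eq_norm]
        exact sum_le_sum_of_subset_of_nonneg (Ico_subset_Ico h1t le_rfl)
          fun _ _ _ => norm_nonneg _
      _ ≤ r := hmov
  rw [Metric.mem_ball] at hT ⊢
  linarith [dist_triangle (o t) (o T) z]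

variable [NormedSpace ℝ E]

theorem convexOn_sum_norm_sub_succ (s : Finset ℕ) :
    ConvexOn ℝ Set.univ fun o : ℕ → E => ∑ t ∈ s, ‖o t - o (t + 1)‖ := by
  induction s using Finset.induction_on with
  | empty => simpa using convexOn_const (0 : ℝ) (convex_univ (𝕜 := ℝ) (E := ℕ → E))
  | insert t s ht ih =>
    simp_rw [sum_insert ht]
    exact ((convexOn_norm convex_univ).comp_linearMap
      (LinearMap.proj (R := ℝ) (φ := fun _ => E) t - LinearMap.proj (t + 1))).add ih

def selectorPaths (K : ℕ → Set E) (T : ℕ) (r : ℝ) : Set (ℕ → E) :=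
  (Icc 1 T : Set ℕ).pi K ∩ {o | ∑ t ∈ Ico 1 T, ‖o t - o (t + 1)‖ ≤ r}

theorem convex_selectorPaths {K : ℕ → Set E} (hK : ∀ t, Convex ℝ (K t)) (T : ℕ) (r : ℝ) :
    Convex ℝ (selectorPaths K T r) := by
  refine (convex_pi fun t _ => hK t).inter ?_
  simpa using (convexOn_sum_norm_sub_succ (E := E) (Ico 1 T)).convex_le r

end Movement

theorem stmt_3_general (d T : ℕ)
    (z : EuclideanSpace ℝ (Fin d)) (R r : ℝ)
    (K : ℕ → Set (EuclideanSpace ℝ (Fin d)))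
    (hK : ∀ t, Convex ℝ (K t))
    (ΩT : Set (EuclideanSpace ℝ (Fin d)))
    (hΩT : ΩT = {y | ∃ o : ℕ → EuclideanSpace ℝ (Fin d),
      (∀ t ∈ Finset.Icc 1 T, o t ∈ K t ∩ Metric.closedBall z R) ∧ o T = y ∧
      ∑ t ∈ Finset.Ico 1 T, ‖o t - o (t + 1)‖ ≤ r})
    (hne : ΩT.Nonempty) (hloc : ΩT ⊆ Metric.ball z (R - r)) :
    ∀ o : ℕ → EuclideanSpace ℝ (Fin d),
      (∀ t ∈ Finset.Icc 1 T, o t ∈ K t) → o 1 ∈ Metric.closedBall z R →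
      (∑ t ∈ Finset.Ico 1 T, ‖o t - o (t + 1)‖) ≤ r →
      (∀ t ∈ Finset.Icc 1 T, o t ∈ Metric.closedBall z R) ∧ o T ∈ ΩT := by
  subst hΩT
  set C := (Icc 1 T : Set ℕ).pi fun _ => Metric.closedBall z R
  set U := (Icc 1 T : Set ℕ).pi fun _ => Metric.ball z R
  have hstep : selectorPaths K T r ∩ C ⊆ U := fun o ⟨⟨hoK, hmov⟩, hoC⟩ =>
    mem_ball_of_sum_norm_sub_le hmov (hloc ⟨o, fun t ht => ⟨hoK t ht, hoC t ht⟩, rfl, hmov⟩)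
  have hsub : selectorPaths K T r ⊆ U := by
    refine (convex_selectorPaths hK T r).isPreconnected.subset_of_inter_closed_subset
      (isOpen_set_pi (finite_toSet _) fun _ _ => Metric.isOpen_ball)
      (isClosed_set_pi fun _ _ => Metric.isClosed_closedBall)
      (Set.pi_mono fun _ _ => Metric.ball_subset_closedBall) hstep ?_
    obtain ⟨_, p, hp, rfl, hpmov⟩ := hne
    exact ⟨p, ⟨⟨fun t ht => (hp t ht).1, hpmov⟩, fun t ht => (hp t ht).2⟩⟩
  intro o hoK _ hmov
  have hoC : ∀ t ∈ Icc 1 T, o t ∈ Metric.closedBall z R := fun t ht =>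
    Metric.ball_subset_closedBall (hsub ⟨hoK, hmov⟩ t ht)
  exact ⟨hoC, o, fun t ht => ⟨hoK t ht, hoC t ht⟩, rfl, hmov⟩

theorem stmt_3 (d T : ℕ) (hT : 1 ≤ T)
    (z : EuclideanSpace ℝ (Fin d)) (R r : ℝ) (hr : 0 < r) (hR : r < R)
    (K : ℕ → Set (EuclideanSpace ℝ (Fin d)))
    (hK : ∀ t, Convex ℝ (K t))
    (ΩT : Set (EuclideanSpace ℝ (Fin d)))
    (hΩT : ΩT = {y | ∃ o : ℕ → EuclideanSpace ℝ (Fin d),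
      (∀ t ∈ Finset.Icc 1 T, o t ∈ K t ∩ Metric.closedBall z R) ∧ o T = y ∧
      ∑ t ∈ Finset.Ico 1 T, ‖o t - o (t + 1)‖ ≤ r})
    (hne : ΩT.Nonempty) (hloc : ΩT ⊆ Metric.ball z (R - r)) :
    ∀ o : ℕ → EuclideanSpace ℝ (Fin d),
      (∀ t ∈ Finset.Icc 1 T, o t ∈ K t) → o 1 ∈ Metric.closedBall z R →
      (∑ t ∈ Finset.Ico 1 T, ‖o t - o (t + 1)‖) ≤ r →
      (∀ t ∈ Finset.Icc 1 T, o t ∈ Metric.closedBall z R) ∧ o T ∈ ΩT :=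
  stmt_3_general d T z R r K hK ΩT hΩT hne hloc
end

section
/- Let alpha >= 1, r > 0, and R = 7·alpha·r. Let z, z_new, o, o_new in R^d with ||z_new - z|| <= R and ||o - o_new|| >= r. Define Phi = max(||z - o|| - alpha·r, alpha·r) and, with r_new arbitrary in {r/2, 2r} and the corresponding Phi_new = max(||z_new - o_new|| - alpha·r_new, alpha·r_new). Then Phi_new <= Phi + (1 + 8·alpha)·||o - o_new||. -/
/-!
Since the offline point moved by `D = ‖o - o_new‖ ≥ r`, every quantity of size `r` can be charged
to `D`. By the triangle inequality through `z` and `o`, the first branch of `Phi_new` exceeds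
`‖z - o‖ - α r` by at most `7 α r + α r + D ≤ (1 + 8 α) D`, and the second branch `α r_new ≤ 2 α r`
exceeds `α r` by at most `α r ≤ α D`.
-/

theorem max_dist_sub_le_of_le_dist {X : Type*} [PseudoMetricSpace X] {α r r' : ℝ} {z z' o o' : X}
    (hα : 0 ≤ α) (hr' : 0 ≤ r') (hr'r : r' ≤ 2 * r) (hz : dist z' z ≤ 7 * α * r)
    (ho : r ≤ dist o o') :
    max (dist z' o' - α * r') (α * r') ≤
      max (dist z o - α * r) (α * r) + (1 + 8 * α) * dist o o' := by
  have hαr : α * r ≤ α * dist o o' := mul_le_mul_of_nonneg_left ho hα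
  have hαr' : α * r' ≤ 2 * (α * r) := by nlinarith
  have hfar : 0 ≤ dist o o' := dist_nonneg
  apply max_le
  · calc dist z' o' - α * r'
        ≤ dist z' z + dist z o + dist o o' - α * r' := by
          gcongr; exact dist_triangle4 z' z o o'
      _ ≤ (dist z o - α * r) + (1 + 8 * α) * dist o o' := by nlinarith
      _ ≤ _ := by gcongr; exact le_max_left _ _
  · calc α * r' ≤ α * r + (1 + 8 * α) * dist o o' := by nlinarith
      _ ≤ _ := by gcongr; exact le_max_right _ _

theorem stmt_5 (d : ℕ) (α r R r_new : ℝ) (hα : 1 ≤ α) (hr : 0 < r)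
    (hR : R = 7 * α * r) (hrnew : r_new = r / 2 ∨ r_new = 2 * r)
    (z z_new o o_new : EuclideanSpace ℝ (Fin d))
    (hz : ‖z_new - z‖ ≤ R) (ho : r ≤ ‖o - o_new‖) :
    max (‖z_new - o_new‖ - α * r_new) (α * r_new) ≤
      max (‖z - o‖ - α * r) (α * r) + (1 + 8 * α) * ‖o - o_new‖ := by
  have hr_new : 0 ≤ r_new ∧ r_new ≤ 2 * r := by
    rcases hrnew with rfl | rfl <;> constructor <;> linarith
  simp only [← dist_eq_norm] at hz ho ⊢
  exact max_dist_sub_le_of_le_dist (by linarith) hr_new.1 hr_new.2 (hR ▸ hz) ho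
end

section
/- Let theta be uniformly distributed on the sphere S = {theta in V^perp : ||theta|| = gamma·r} of a k-dimensional subspace V^perp of R^d, and let u_t(theta) in V^perp satisfy u_T(theta) = theta and ||u_t(theta) - theta - m_t|| <= 2r for all t, where m_t = E[u_t(theta)]. Define Sigma_t = E[(u_t(theta) - m_t)(u_t(theta) - m_t)^T] as an operator on V^perp. If gamma >= 12k, then Sigma_t >= (gamma^2·r^2/(2k))·Id (in the positive semidefinite order on V^perp). -/
/-!
Write `u_t - m_t = θ + ξ_t` with `‖ξ_t‖ ≤ 2r`. For a unit vector `v`, the quadratic form of `Σ_t`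
is `E[(⟪v, θ⟫ + ⟪v, ξ_t⟫)²] ≥ E[⟪v, θ⟫²] - 2 · (γ r) · (2 r)`, since `|⟪v, θ⟫| ≤ γ r` and
`⟪v, ξ_t⟫² ≥ 0`; isotropy of `θ` gives `E[⟪v, θ⟫²] = γ² r² / k`. The loss `4 γ r²` is at most half
of the main term as soon as `γ ≥ 8k`.
-/

open MeasureTheory

lemma sq_sub_two_mul_le_add_sq {a b A B : ℝ} (ha : |a| ≤ A) (hb : |b| ≤ B) :
    a ^ 2 - 2 * A * B ≤ (a + b) ^ 2 := by
  have hab : |a| * |b| ≤ A * B := mul_le_mul ha hb (abs_nonneg b) ((abs_nonneg a).trans ha)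
  have : -(|a| * |b|) ≤ a * b := by rw [← abs_mul]; exact neg_abs_le _
  nlinarith [sq_nonneg b]

lemma integral_inner_sq_sub_le_integral_inner_add_sq {Ω E : Type*} [MeasurableSpace Ω]
    {μ : Measure Ω} [IsProbabilityMeasure μ] [NormedAddCommGroup E] [InnerProductSpace ℝ E]
    {X ξ : Ω → E} {A B : ℝ} (hX : AEStronglyMeasurable X μ) (hξ : AEStronglyMeasurable ξ μ)
    (hXA : ∀ ω, ‖X ω‖ ≤ A) (hξB : ∀ ω, ‖ξ ω‖ ≤ B) (v : E) :
    ∫ ω, inner ℝ v (X ω) ^ 2 ∂μ - 2 * (‖v‖ * A) * (‖v‖ * B) ≤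
      ∫ ω, inner ℝ v (X ω + ξ ω) ^ 2 ∂μ := by
  have hinner_le {Y : Ω → E} {C : ℝ} (hY : ∀ ω, ‖Y ω‖ ≤ C) (ω : Ω) :
      |inner ℝ v (Y ω)| ≤ ‖v‖ * C :=
    (abs_real_inner_le_norm v (Y ω)).trans (mul_le_mul_of_nonneg_left (hY ω) (norm_nonneg v))
  have hXξ : ∀ ω, ‖X ω + ξ ω‖ ≤ A + B := fun ω =>
    (norm_add_le _ _).trans (add_le_add (hXA ω) (hξB ω))
  have hsq_integrable {Y : Ω → E} {C : ℝ} (hYm : AEStronglyMeasurable Y μ)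
      (hY : ∀ ω, ‖Y ω‖ ≤ C) : Integrable (fun ω => inner ℝ v (Y ω) ^ 2) μ := by
    refine .of_bound ((aestronglyMeasurable_const.inner hYm).pow 2) ((‖v‖ * C) ^ 2) ?_
    refine .of_forall fun ω => ?_
    rw [Real.norm_eq_abs, abs_pow]
    exact pow_le_pow_left₀ (abs_nonneg _) (hinner_le hY ω) 2
  have hXint := hsq_integrable hX hXA
  calc ∫ ω, inner ℝ v (X ω) ^ 2 ∂μ - 2 * (‖v‖ * A) * (‖v‖ * B)
      = ∫ ω, (inner ℝ v (X ω) ^ 2 - 2 * (‖v‖ * A) * (‖v‖ * B)) ∂μ := by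
        rw [integral_sub hXint (integrable_const _), integral_const, probReal_univ, one_smul]
    _ ≤ ∫ ω, inner ℝ v (X ω + ξ ω) ^ 2 ∂μ :=
        integral_mono (hXint.sub (integrable_const _)) (hsq_integrable (hX.add hξ) hXξ)
          fun ω => by
            rw [inner_add_right]
            exact sq_sub_two_mul_le_add_sq (hinner_le hXA ω) (hinner_le hξB ω)

lemma four_mul_le_sq_div_two_mul {k γ : ℝ} (hk : 0 < k) (hγ : 8 * k ≤ γ) :
    4 * γ ≤ γ ^ 2 / (2 * k) := by
  rw [le_div_iff₀ (by positivity)]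
  nlinarith

theorem stmt_10_general (d k : ℕ) (hk : 1 ≤ k) (γ r : ℝ) (hγ : 12 * (k : ℝ) ≤ γ)
    (Ωs : Type) [MeasurableSpace Ωs] (μ : Measure Ωs) [IsProbabilityMeasure μ]
    (V : Submodule ℝ (EuclideanSpace ℝ (Fin d)))
    (θ : Ωs → EuclideanSpace ℝ (Fin d)) (hθmeas : Measurable θ)
    (hθnorm : ∀ ω, ‖θ ω‖ = γ * r)
    -- θ is uniformly distributed on the sphere of radius γ·r in Vᗮ, so in particular
    -- E[θ θᵀ] = ((γ r)²/k)·Id as an operator on Vᗮ: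
    (hiso : ∀ v ∈ Vᗮ, ∫ ω, (inner ℝ v (θ ω) : ℝ) ^ 2 ∂μ = (γ * r) ^ 2 / k * ‖v‖ ^ 2)
    (T : ℕ) (u : ℕ → Ωs → EuclideanSpace ℝ (Fin d))
    (humeas : ∀ t, Measurable (u t))
    (m : ℕ → EuclideanSpace ℝ (Fin d))
    (hxi : ∀ t ≤ T, ∀ ω, ‖u t ω - θ ω - m t‖ ≤ 2 * r) :
    -- conclusion: Σ_t ⪰ (γ² r² / (2k))·Id on Vᗮ, as quadratic forms
    ∀ t ≤ T, ∀ v ∈ Vᗮ,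
      γ ^ 2 * r ^ 2 / (2 * k) * ‖v‖ ^ 2 ≤ ∫ ω, (inner ℝ v (u t ω - m t) : ℝ) ^ 2 ∂μ := by
  intro t ht v hv
  have hkpos : (0 : ℝ) < k := by exact_mod_cast hk
  have hξ : ∀ ω, ‖u t ω - m t - θ ω‖ ≤ 2 * r := fun ω => by
    rw [sub_right_comm]; exact hxi t ht ω
  have hmoment := integral_inner_sq_sub_le_integral_inner_add_sq (μ := μ)
    (ξ := fun ω => u t ω - m t - θ ω) hθmeas.aestronglyMeasurable
    ((humeas t).sub_const (m t) |>.sub hθmeas).aestronglyMeasurable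
    (fun ω => (hθnorm ω).le) hξ v
  simp only [add_sub_cancel] at hmoment
  rw [hiso v hv] at hmoment
  have hloss : 4 * γ ≤ γ ^ 2 / (2 * k) := four_mul_le_sq_div_two_mul hkpos (by linarith)
  calc γ ^ 2 * r ^ 2 / (2 * k) * ‖v‖ ^ 2
      = (γ ^ 2 / k - γ ^ 2 / (2 * k)) * (r ^ 2 * ‖v‖ ^ 2) := by field_simp; ring
    _ ≤ (γ ^ 2 / k - 4 * γ) * (r ^ 2 * ‖v‖ ^ 2) := by gcongr
    _ = (γ * r) ^ 2 / k * ‖v‖ ^ 2 - 2 * (‖v‖ * (γ * r)) * (‖v‖ * (2 * r)) := by ring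
    _ ≤ _ := hmoment

theorem stmt_10 (d k : ℕ) (hk : 1 ≤ k) (γ r : ℝ) (hr : 0 < r) (hγ : 12 * (k : ℝ) ≤ γ)
    (Ωs : Type) [MeasurableSpace Ωs] (μ : Measure Ωs) [IsProbabilityMeasure μ]
    (V : Submodule ℝ (EuclideanSpace ℝ (Fin d)))
    (hdim : Module.finrank ℝ Vᗮ = k)
    (θ : Ωs → EuclideanSpace ℝ (Fin d)) (hθmeas : Measurable θ)
    (hθW : ∀ ω, θ ω ∈ Vᗮ) (hθnorm : ∀ ω, ‖θ ω‖ = γ * r)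
    -- θ is uniformly distributed on the sphere of radius γ·r in Vᗮ, so in particular
    -- E[θ θᵀ] = ((γ r)²/k)·Id as an operator on Vᗮ:
    (hiso : ∀ v ∈ Vᗮ, ∫ ω, (inner ℝ v (θ ω) : ℝ) ^ 2 ∂μ = (γ * r) ^ 2 / k * ‖v‖ ^ 2)
    (T : ℕ) (u : ℕ → Ωs → EuclideanSpace ℝ (Fin d))
    (humeas : ∀ t, Measurable (u t)) (huW : ∀ t ω, u t ω ∈ Vᗮ)
    (huint : ∀ t, Integrable (u t) μ)
    (m : ℕ → EuclideanSpace ℝ (Fin d)) (hm : ∀ t, m t = ∫ ω, u t ω ∂μ)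
    (huT : ∀ ω, u T ω = θ ω)
    (hxi : ∀ t ≤ T, ∀ ω, ‖u t ω - θ ω - m t‖ ≤ 2 * r) :
    -- conclusion: Σ_t ⪰ (γ² r² / (2k))·Id on Vᗮ, as quadratic forms
    ∀ t ≤ T, ∀ v ∈ Vᗮ,
      γ ^ 2 * r ^ 2 / (2 * k) * ‖v‖ ^ 2 ≤ ∫ ω, (inner ℝ v (u t ω - m t) : ℝ) ^ 2 ∂μ :=
  stmt_10_general d k hk γ r hγ Ωs μ V θ hθmeas hθnorm hiso T u humeas m hxi
end

section
/- Suppose Omega ⊆ C := {y in R^d : ||P_V y|| <= gamma'·r} contains in its projection P_{V^perp}(tilde-Omega) the entire sphere S = {theta in V^perp : ||theta|| = gamma·r}, where tilde-Omega is the set of endpoints of paths (y_t) with y_t in K_t ∩ C and total movement <= r, gamma >= 12k, k = dim(V^perp). Then there exists a path (Y_t) with Y_t in K_t ∩ V for all t and total movement sum ||Y_t - Y_{t+1}|| <= (1 + (2 + 4·gamma')·k/gamma)·r. -/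
/-!
Let `e₁, …, e_k` be an orthonormal basis of `Vᗮ`. Each of the `2k` points `±γr eᵢ` of the sphere
is the `Vᗮ`-projection of the endpoint of a path of length at most `r` through the sets `Kₜ ∩ C`.
At each time the `Vᗮ`-components of these paths lie within `r` of their endpoints, so they form a
small perturbation of the cross-polytope `{±γr eᵢ}`, and their barycentre with the weights
`(1 ± ⟪eᵢ, xₜ⟫) / 2k` vanishes when `xₜ` solves a linear system that is a perturbation of
`2γr · id`. The average `Yₜ` of the paths with these weights then lies in `V`, and in `Kₜ` by
convexity. Its length is at most `(1 + β) r` (each weight is at most `(1 + β) / 2k`, where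
`β = k / (γ - k)`) plus `γ' r` times the total variation of the weights, which the same
perturbation estimate bounds by `β (1 + β)`. This replaces the paper's average over the whole
sphere, with covariance-corrected weights, by an average over `2k` points.
-/

open Finset RealInnerProductSpace

section PerturbedScaling

variable {E : Type*} [NormedAddCommGroup E] [InnerProductSpace ℝ E] {ι : Type*} [Fintype ι]
  {e : ι → E}

theorem norm_sum_inner_smul_le (he : ∀ i, ‖e i‖ ≤ 1) (w : E) (z : ι → E) :
    ‖∑ i, ⟪e i, w⟫ • z i‖ ≤ ‖w‖ * ∑ i, ‖z i‖ := by
  rw [mul_sum]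
  refine (norm_sum_le _ _).trans (sum_le_sum fun i _ => ?_)
  rw [norm_smul, Real.norm_eq_abs]
  gcongr
  exact (abs_real_inner_le_norm _ _).trans (mul_le_of_le_one_left (norm_nonneg _) (he i))

theorem mul_norm_le_of_smul_add_sum_inner_smul_eq (he : ∀ i, ‖e i‖ ≤ 1) {c : ℝ} (hc : 0 ≤ c)
    {z : ι → E} {x b : E} (h : c • x + ∑ i, ⟪e i, x⟫ • z i = b) :
    (c - ∑ i, ‖z i‖) * ‖x‖ ≤ ‖b‖ := by
  have : c * ‖x‖ ≤ ‖b‖ + ‖x‖ * ∑ i, ‖z i‖ := calc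
    c * ‖x‖ = ‖b - ∑ i, ⟪e i, x⟫ • z i‖ := by
      rw [← h, add_sub_cancel_right, norm_smul, Real.norm_of_nonneg hc]
    _ ≤ ‖b‖ + ‖∑ i, ⟪e i, x⟫ • z i‖ := norm_sub_le _ _
    _ ≤ ‖b‖ + ‖x‖ * ∑ i, ‖z i‖ := by gcongr; exact norm_sum_inner_smul_le he x z
  linarith

theorem mul_norm_sub_le_of_smul_add_sum_inner_smul_eq (he : ∀ i, ‖e i‖ ≤ 1) {c : ℝ} (hc : 0 ≤ c)
    {z z' : ι → E} {x x' b b' : E} (h : c • x + ∑ i, ⟪e i, x⟫ • z i = b)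
    (h' : c • x' + ∑ i, ⟪e i, x'⟫ • z' i = b') :
    (c - ∑ i, ‖z i‖) * ‖x - x'‖ ≤ ‖b - b'‖ + ‖x'‖ * ∑ i, ‖z i - z' i‖ := by
  have hdiff : c • (x - x') + ∑ i, ⟪e i, x - x'⟫ • z i
      = (b - b') - ∑ i, ⟪e i, x'⟫ • (z i - z' i) := by
    simp only [← h, ← h', inner_sub_right, sub_smul, smul_sub, sum_sub_distrib]
    abel
  refine (mul_norm_le_of_smul_add_sum_inner_smul_eq he hc hdiff).trans ?_
  exact (norm_sub_le _ _).trans (add_le_add_right (norm_sum_inner_smul_le he x' _) _)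

theorem exists_smul_add_sum_inner_smul_eq [CompleteSpace E] (he : ∀ i, ‖e i‖ ≤ 1) {c : ℝ}
    {z : ι → E} (hz : ∑ i, ‖z i‖ < c) (b : E) : ∃ x, c • x + ∑ i, ⟪e i, x⟫ • z i = b := by
  have hc : 0 < c := (sum_nonneg fun i _ => norm_nonneg (z i)).trans_lt hz
  set g : E → E := fun x => c⁻¹ • (b - ∑ i, ⟪e i, x⟫ • z i) with hg
  have hg_contr : ContractingWith (c⁻¹ * ∑ i, ‖z i‖).toNNReal g := by
    refine ⟨Real.toNNReal_lt_one.2 ((inv_mul_lt_one₀ hc).2 hz),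
      LipschitzWith.of_dist_le' fun x y => ?_⟩
    have : g x - g y = c⁻¹ • ∑ i, ⟪e i, y - x⟫ • z i := by
      simp only [hg, ← smul_sub, inner_sub_right, sub_smul, sum_sub_distrib]
      abel_nf
    rw [dist_eq_norm, dist_eq_norm, this, norm_smul, Real.norm_of_nonneg (inv_nonneg.2 hc.le),
      mul_assoc, mul_comm (∑ i, ‖z i‖), ← norm_sub_rev y x]
    gcongr
    exact norm_sum_inner_smul_le he _ _
  refine ⟨ContractingWith.fixedPoint g hg_contr, ?_⟩
  nth_rewrite 1 [← hg_contr.fixedPoint_isFixedPt]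
  simp only [hg, smul_smul, mul_inv_cancel₀ hc.ne', one_smul, sub_add_cancel]

end PerturbedScaling

def boolSign (s : Bool) : ℝ := if s then 1 else -1

theorem abs_boolSign (s : Bool) : |boolSign s| = 1 := by
  cases s <;> simp [boolSign]

theorem sum_norm_sub_le_sum_norm {E : Type*} [SeminormedAddCommGroup E] {ι : Type*} [Fintype ι]
    (δ : ι × Bool → E) : ∑ i, ‖δ (i, true) - δ (i, false)‖ ≤ ∑ q, ‖δ q‖ := by
  rw [Fintype.sum_prod_type]
  exact sum_le_sum fun i _ => (norm_sub_le _ _).trans_eq (Fintype.sum_bool fun s => ‖δ (i, s)‖).symm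

theorem norm_sub_le_sum_Ico_norm_sub {E : Type*} [SeminormedAddCommGroup E] (f : ℕ → E)
    {m t n : ℕ} (hmt : m ≤ t) (htn : t ≤ n) :
    ‖f t - f n‖ ≤ ∑ i ∈ Ico m n, ‖f i - f (i + 1)‖ := by
  simp only [← dist_eq_norm]
  exact (dist_le_Ico_sum_dist f htn).trans
    (sum_le_sum_of_subset_of_nonneg (Ico_subset_Ico_left hmt) fun _ _ _ => dist_nonneg)

theorem sum_le_two_mul_of_forall_le {k : ℕ} {f : Fin k × Bool → ℝ} {r : ℝ} (hf : ∀ q, f q ≤ r) :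
    ∑ q, f q ≤ 2 * k * r := by
  refine (sum_le_card_nsmul _ _ _ fun q _ => hf q).trans_eq ?_
  simp only [card_univ, Fintype.card_prod, Fintype.card_fin, Fintype.card_bool, nsmul_eq_mul]
  push_cast
  ring

section Balancing

variable {E : Type*} [NormedAddCommGroup E] [InnerProductSpace ℝ E] {k : ℕ}
  (e : OrthonormalBasis (Fin k) ℝ E)

noncomputable def balancingWeight (x : E) (q : Fin k × Bool) : ℝ :=
  (1 + boolSign q.2 * ⟪e q.1, x⟫) / (2 * k)

/-- The linear equation for `x` saying that the weights `balancingWeight e x` put the barycentre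
of the `2k` points `(boolSign s * ρ) • e i + δ (i, s)` at the origin. -/
def IsBalancing (ρ : ℝ) (δ : Fin k × Bool → E) (x : E) : Prop :=
  (2 * ρ) • x + ∑ i, ⟪e i, x⟫ • (δ (i, true) - δ (i, false)) = -∑ q, δ q

variable {e}

theorem abs_boolSign_mul_inner_le (s : Bool) (i : Fin k) (x : E) :
    |boolSign s * ⟪e i, x⟫| ≤ ‖x‖ := by
  rw [abs_mul, abs_boolSign, one_mul]
  exact (abs_real_inner_le_norm _ _).trans_eq (by rw [e.norm_eq_one, one_mul])

theorem balancingWeight_nonneg {x : E} (hx : ‖x‖ ≤ 1) (q : Fin k × Bool) :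
    0 ≤ balancingWeight e x q := by
  have : 0 ≤ 1 + boolSign q.2 * ⟪e q.1, x⟫ := by
    linarith [neg_abs_le (boolSign q.2 * ⟪e q.1, x⟫), abs_boolSign_mul_inner_le (e := e) q.2 q.1 x]
  exact div_nonneg this (by positivity)

theorem balancingWeight_le (x : E) (q : Fin k × Bool) :
    balancingWeight e x q ≤ (1 + ‖x‖) / (2 * k) := by
  unfold balancingWeight
  gcongr
  exact (le_abs_self _).trans (abs_boolSign_mul_inner_le q.2 q.1 x)

theorem sum_balancingWeight (hk : 0 < k) (x : E) : ∑ q, balancingWeight e x q = 1 := by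
  have hpair : ∀ i, ∑ s, balancingWeight e x (i, s) = 1 / k := fun i => by
    simp only [balancingWeight, Fintype.sum_bool, boolSign, if_true, Bool.false_eq_true, if_false]
    field_simp
    ring
  rw [Fintype.sum_prod_type, sum_congr rfl fun i _ => hpair i, sum_const, card_univ,
    Fintype.card_fin, nsmul_eq_mul]
  field_simp

theorem sum_abs_balancingWeight_sub_le (x y : E) :
    ∑ q, |balancingWeight e x q - balancingWeight e y q| ≤ ‖x - y‖ := by
  have h : ∀ q, |balancingWeight e x q - balancingWeight e y q| ≤ ‖x - y‖ / (2 * k) := by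
    intro q
    have hdiff : balancingWeight e x q - balancingWeight e y q
        = boolSign q.2 * ⟪e q.1, x - y⟫ / (2 * k) := by
      simp only [balancingWeight, inner_sub_right]
      ring
    rw [hdiff, abs_div, abs_of_nonneg (by positivity : (0 : ℝ) ≤ 2 * k)]
    exact div_le_div_of_nonneg_right (abs_boolSign_mul_inner_le q.2 q.1 _) (by positivity)
  refine (sum_le_two_mul_of_forall_le h).trans ?_
  rcases k.eq_zero_or_pos with rfl | hk
  · simp
  · exact (mul_div_cancel₀ _ (by positivity)).le

theorem IsBalancing.sum_balancingWeight_smul_eq_zero {ρ : ℝ} {δ : Fin k × Bool → E} {x : E}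
    (h : IsBalancing e ρ δ x) :
    ∑ q, balancingWeight e x q • ((boolSign q.2 * ρ) • e q.1 + δ q) = 0 := by
  have hpair : ∀ i, ∑ s, balancingWeight e x (i, s) • ((boolSign s * ρ) • e i + δ (i, s))
      = (2 * k : ℝ)⁻¹ • ((2 * ρ) • (⟪e i, x⟫ • e i) + ⟪e i, x⟫ • (δ (i, true) - δ (i, false))
          + ∑ s, δ (i, s)) := fun i => by
    simp only [balancingWeight, Fintype.sum_bool, boolSign, if_true, Bool.false_eq_true, if_false]
    module
  unfold IsBalancing at h
  rw [Fintype.sum_prod_type, sum_congr rfl fun i _ => hpair i, ← smul_sum, sum_add_distrib,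
    sum_add_distrib, ← smul_sum, e.sum_repr', h, ← Fintype.sum_prod_type, neg_add_cancel,
    smul_zero]

theorem exists_isBalancing {ρ r : ℝ} (hρ : k * r < ρ) {δ : Fin k × Bool → E}
    (hδ : ∀ q, ‖δ q‖ ≤ r) : ∃ x, IsBalancing e ρ δ x := by
  have : FiniteDimensional ℝ E := Module.Finite.of_basis e.toBasis
  have : CompleteSpace E := FiniteDimensional.complete ℝ E
  refine exists_smul_add_sum_inner_smul_eq (fun i => (e.norm_eq_one i).le) ?_ _
  linarith [(sum_norm_sub_le_sum_norm δ).trans (sum_le_two_mul_of_forall_le hδ)]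

theorem IsBalancing.norm_le {γ r : ℝ} (hr : 0 < r) (hγ : k < γ) {δ : Fin k × Bool → E} {x : E}
    (h : IsBalancing e (γ * r) δ x) (hδ : ∀ q, ‖δ q‖ ≤ r) : ‖x‖ ≤ k / (γ - k) := by
  have hz := (sum_norm_sub_le_sum_norm δ).trans (sum_le_two_mul_of_forall_le hδ)
  have hb : ‖-∑ q, δ q‖ ≤ 2 * k * r :=
    (norm_neg _).trans_le ((norm_sum_le _ _).trans (sum_le_two_mul_of_forall_le hδ))
  have hγ0 : 0 < γ := (Nat.cast_nonneg k).trans_lt hγ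
  have key := mul_norm_le_of_smul_add_sum_inner_smul_eq (fun i => (e.norm_eq_one i).le)
    (by positivity) h
  rw [le_div_iff₀ (sub_pos.2 hγ)]
  nlinarith [norm_nonneg x]

theorem IsBalancing.norm_sub_le {γ r : ℝ} (hr : 0 < r) (hγ : k < γ) {δ δ' : Fin k × Bool → E}
    {x x' : E} (h : IsBalancing e (γ * r) δ x) (h' : IsBalancing e (γ * r) δ' x')
    (hδ : ∀ q, ‖δ q‖ ≤ r) (hδ' : ∀ q, ‖δ' q‖ ≤ r) :
    2 * (γ - k) * r * ‖x - x'‖ ≤ (1 + k / (γ - k)) * ∑ q, ‖δ q - δ' q‖ := by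
  have hz := (sum_norm_sub_le_sum_norm δ).trans (sum_le_two_mul_of_forall_le hδ)
  have hb : ‖-∑ q, δ q - -∑ q, δ' q‖ ≤ ∑ q, ‖δ q - δ' q‖ := by
    rw [neg_sub_neg, norm_sub_rev, ← sum_sub_distrib]
    exact norm_sum_le _ _
  have hz' : ∑ i, ‖δ (i, true) - δ (i, false) - (δ' (i, true) - δ' (i, false))‖
      ≤ ∑ q, ‖δ q - δ' q‖ := by
    simpa only [Pi.sub_apply, sub_sub_sub_comm] using sum_norm_sub_le_sum_norm (δ - δ')
  have hx' := h'.norm_le hr hγ hδ'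
  have hγ0 : 0 < γ := (Nat.cast_nonneg k).trans_lt hγ
  have key := mul_norm_sub_le_of_smul_add_sum_inner_smul_eq (fun i => (e.norm_eq_one i).le)
    (by positivity) h h'
  calc 2 * (γ - k) * r * ‖x - x'‖
      ≤ (2 * (γ * r) - ∑ i, ‖δ (i, true) - δ (i, false)‖) * ‖x - x'‖ := by
        gcongr
        linarith
    _ ≤ ∑ q, ‖δ q - δ' q‖ + k / (γ - k) * ∑ q, ‖δ q - δ' q‖ := by
        refine key.trans (add_le_add hb ?_)
        exact mul_le_mul hx' hz' (sum_nonneg fun _ _ => norm_nonneg _) (by positivity)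
    _ = (1 + k / (γ - k)) * ∑ q, ‖δ q - δ' q‖ := by ring

theorem exists_isBalancing_path {γ r : ℝ} (hr : 0 < r) (hγ : k < γ) {T : ℕ}
    (δ : ℕ → Fin k × Bool → E) (hδ : ∀ t ∈ Icc 1 T, ∀ q, ‖δ t q‖ ≤ r)
    (hδ_len : ∀ q, ∑ t ∈ Ico 1 T, ‖δ t q - δ (t + 1) q‖ ≤ r) :
    ∃ x : ℕ → E, (∀ t ∈ Icc 1 T, IsBalancing e (γ * r) (δ t) (x t) ∧ ‖x t‖ ≤ k / (γ - k)) ∧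
      ∑ t ∈ Ico 1 T, ‖x t - x (t + 1)‖ ≤ k / (γ - k) * (1 + k / (γ - k)) := by
  have hγk : 0 < γ - k := sub_pos.2 hγ
  have hρ : k * r < γ * r := mul_lt_mul_of_pos_right hγ hr
  choose! x hx using fun t (ht : t ∈ Icc 1 T) => exists_isBalancing (e := e) hρ (hδ t ht)
  refine ⟨x, fun t ht => ⟨hx t ht, (hx t ht).norm_le hr hγ (hδ t ht)⟩, ?_⟩
  set c := (1 + k / (γ - k)) / (2 * (γ - k) * r)
  have hstep : ∀ t ∈ Ico 1 T, ‖x t - x (t + 1)‖ ≤ c * ∑ q, ‖δ t q - δ (t + 1) q‖ := by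
    intro t ht
    obtain ⟨h1, h2⟩ := mem_Ico.1 ht
    have ht : t ∈ Icc 1 T := mem_Icc.2 ⟨h1, h2.le⟩
    have ht' : t + 1 ∈ Icc 1 T := mem_Icc.2 ⟨by omega, h2⟩
    rw [div_mul_eq_mul_div, le_div_iff₀ (by positivity), mul_comm]
    exact (hx t ht).norm_sub_le hr hγ (hx (t + 1) ht') (hδ t ht) (hδ (t + 1) ht')
  calc ∑ t ∈ Ico 1 T, ‖x t - x (t + 1)‖
      ≤ ∑ t ∈ Ico 1 T, c * ∑ q, ‖δ t q - δ (t + 1) q‖ := sum_le_sum hstep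
    _ = c * ∑ q, ∑ t ∈ Ico 1 T, ‖δ t q - δ (t + 1) q‖ := by rw [← mul_sum, sum_comm]
    _ ≤ c * (2 * k * r) := by gcongr; exact sum_le_two_mul_of_forall_le hδ_len
    _ = k / (γ - k) * (1 + k / (γ - k)) := by
        simp only [c]
        field_simp

end Balancing

theorem norm_sum_smul_sub_sum_smul_le {E : Type*} [SeminormedAddCommGroup E] [NormedSpace ℝ E]
    {ι : Type*} [Fintype ι] {a a' : ι → ℝ} (ha : ∀ i, 0 ≤ a i) (v v' : ι → E) :
    ‖∑ i, a i • v i - ∑ i, a' i • v' i‖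
      ≤ ∑ i, a i * ‖v i - v' i‖ + ∑ i, |a i - a' i| * ‖v' i‖ := by
  rw [← sum_sub_distrib, ← sum_add_distrib]
  refine (norm_sum_le _ _).trans (sum_le_sum fun i _ => ?_)
  calc ‖a i • v i - a' i • v' i‖ = ‖a i • (v i - v' i) + (a i - a' i) • v' i‖ := by
        congr 1; module
    _ ≤ a i * ‖v i - v' i‖ + |a i - a' i| * ‖v' i‖ := by
        refine (norm_add_le _ _).trans_eq ?_
        rw [norm_smul, norm_smul, Real.norm_of_nonneg (ha i), Real.norm_eq_abs]

theorem exists_path_of_balanced_weights {E : Type*} [NormedAddCommGroup E]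
    [InnerProductSpace ℝ E] {ι : Type*} [Fintype ι] (V : Submodule ℝ E)
    [V.HasOrthogonalProjection] {T : ℕ} {K : ℕ → Set E} (hK : ∀ t, Convex ℝ (K t))
    {p : ι → ℕ → E} {w : ℕ → ι → ℝ} {M L ρ D : ℝ} (hM : 0 ≤ M) (hρ : 0 ≤ ρ)
    (hpK : ∀ t ∈ Icc 1 T, ∀ i, p i t ∈ K t)
    (hpV : ∀ t ∈ Icc 1 T, ∀ i, ‖V.starProjection (p i t)‖ ≤ ρ)
    (hp_len : ∀ i, ∑ t ∈ Ico 1 T, ‖p i t - p i (t + 1)‖ ≤ L)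
    (hw_nonneg : ∀ t ∈ Icc 1 T, ∀ i, 0 ≤ w t i) (hw_le : ∀ t ∈ Icc 1 T, ∀ i, w t i ≤ M)
    (hw_sum : ∀ t ∈ Icc 1 T, ∑ i, w t i = 1)
    (hw_bal : ∀ t ∈ Icc 1 T, ∑ i, w t i • Vᗮ.starProjection (p i t) = 0)
    (hw_var : ∑ t ∈ Ico 1 T, ∑ i, |w t i - w (t + 1) i| ≤ D) :
    ∃ Y : ℕ → E, (∀ t ∈ Icc 1 T, Y t ∈ K t ∧ Y t ∈ V) ∧
      ∑ t ∈ Ico 1 T, ‖Y t - Y (t + 1)‖ ≤ M * Fintype.card ι * L + ρ * D := by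
  have hY : ∀ t ∈ Icc 1 T, ∑ i, w t i • p i t = ∑ i, w t i • V.starProjection (p i t) := by
    intro t ht
    calc ∑ i, w t i • p i t
        = ∑ i, w t i • (V.starProjection (p i t) + Vᗮ.starProjection (p i t)) := by
          simp only [V.starProjection_add_starProjection_orthogonal]
      _ = ∑ i, w t i • V.starProjection (p i t) := by
          simp only [smul_add, sum_add_distrib, hw_bal t ht, add_zero]
  refine ⟨fun t => ∑ i, w t i • p i t, fun t ht => ⟨?_, ?_⟩, ?_⟩
  · exact (hK t).sum_mem (fun i _ => hw_nonneg t ht i) (hw_sum t ht) fun i _ => hpK t ht i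
  · dsimp only
    rw [hY t ht]
    exact sum_mem fun i _ => V.smul_mem _ (V.starProjection_apply_mem _)
  have hstep : ∀ t ∈ Ico 1 T, ‖∑ i, w t i • p i t - ∑ i, w (t + 1) i • p i (t + 1)‖
      ≤ M * ∑ i, ‖p i t - p i (t + 1)‖ + ρ * ∑ i, |w t i - w (t + 1) i| := by
    intro t ht
    obtain ⟨h1, h2⟩ := mem_Ico.1 ht
    have ht : t ∈ Icc 1 T := mem_Icc.2 ⟨h1, h2.le⟩
    have ht' : t + 1 ∈ Icc 1 T := mem_Icc.2 ⟨by omega, h2⟩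
    rw [hY t ht, hY (t + 1) ht', mul_sum, mul_sum]
    refine (norm_sum_smul_sub_sum_smul_le (hw_nonneg t ht) _ _).trans (add_le_add ?_ ?_)
    · refine sum_le_sum fun i _ => ?_
      rw [← map_sub]
      exact mul_le_mul (hw_le t ht i) (V.norm_starProjection_apply_le _) (norm_nonneg _) hM
    · refine sum_le_sum fun i _ => ?_
      rw [mul_comm]
      exact mul_le_mul_of_nonneg_right (hpV (t + 1) ht' i) (abs_nonneg _)
  calc ∑ t ∈ Ico 1 T, ‖∑ i, w t i • p i t - ∑ i, w (t + 1) i • p i (t + 1)‖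
      ≤ ∑ t ∈ Ico 1 T, (M * ∑ i, ‖p i t - p i (t + 1)‖ + ρ * ∑ i, |w t i - w (t + 1) i|) :=
        sum_le_sum hstep
    _ = M * ∑ i, ∑ t ∈ Ico 1 T, ‖p i t - p i (t + 1)‖
          + ρ * ∑ t ∈ Ico 1 T, ∑ i, |w t i - w (t + 1) i| := by
        rw [sum_add_distrib, ← mul_sum, ← mul_sum, sum_comm]
    _ ≤ M * ∑ _i : ι, L + ρ * D := by gcongr with i; exact hp_len i
    _ = M * Fintype.card ι * L + ρ * D := by
        rw [sum_const, card_univ, nsmul_eq_mul, mul_assoc]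

theorem exists_balanced_weights {E : Type*} [NormedAddCommGroup E] [InnerProductSpace ℝ E]
    (W : Submodule ℝ E) [W.HasOrthogonalProjection] {k T : ℕ} (hk : 0 < k)
    (B : OrthonormalBasis (Fin k) ℝ W) {γ r : ℝ} (hr : 0 < r) (hγ : 2 * k ≤ γ)
    {p : Fin k × Bool → ℕ → E}
    (hpT : ∀ q, W.orthogonalProjectionOnto (p q T) = (boolSign q.2 * (γ * r)) • B q.1)
    (hp_len : ∀ q, ∑ t ∈ Ico 1 T, ‖p q t - p q (t + 1)‖ ≤ r) :
    ∃ w : ℕ → Fin k × Bool → ℝ,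
      (∀ t ∈ Icc 1 T, ∀ q, 0 ≤ w t q) ∧
      (∀ t ∈ Icc 1 T, ∀ q, w t q ≤ (1 + k / (γ - k)) / (2 * k)) ∧
      (∀ t ∈ Icc 1 T, ∑ q, w t q = 1) ∧
      (∀ t ∈ Icc 1 T, ∑ q, w t q • W.starProjection (p q t) = 0) ∧
      ∑ t ∈ Ico 1 T, ∑ q, |w t q - w (t + 1) q| ≤ k / (γ - k) * (1 + k / (γ - k)) := by
  have hk0 : (0 : ℝ) < k := by exact_mod_cast hk
  have hγk : (k : ℝ) < γ := by linarith
  have hβ : (k : ℝ) / (γ - k) ≤ 1 := by rw [div_le_one (by linarith)]; linarith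
  set u : Fin k × Bool → ℕ → W := fun q t => W.orthogonalProjectionOnto (p q t)
  have hu_len : ∀ q, ∑ t ∈ Ico 1 T, ‖u q t - u q (t + 1)‖ ≤ r := fun q =>
    (sum_le_sum fun t _ => by
      rw [← map_sub]; exact W.norm_orthogonalProjectionOnto_apply_le _).trans (hp_len q)
  obtain ⟨x, hx, hx_var⟩ := exists_isBalancing_path (e := B) hr hγk (fun t q => u q t - u q T)
    (fun t ht q => (norm_sub_le_sum_Ico_norm_sub _ (mem_Icc.1 ht).1 (mem_Icc.1 ht).2).trans
      (hu_len q))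
    (fun q => by simpa only [sub_sub_sub_cancel_right] using hu_len q)
  refine ⟨fun t => balancingWeight B (x t),
    fun t ht => balancingWeight_nonneg ((hx t ht).2.trans hβ),
    fun t ht q => (balancingWeight_le _ q).trans (by gcongr; exact (hx t ht).2),
    fun t _ => sum_balancingWeight hk _, fun t ht => ?_,
    (sum_le_sum fun t _ => sum_abs_balancingWeight_sub_le _ _).trans hx_var⟩
  have hbal := (hx t ht).1.sum_balancingWeight_smul_eq_zero
  simp only [show ∀ q, u q T = (boolSign q.2 * (γ * r)) • B q.1 from hpT, add_sub_cancel] at hbal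
  simpa only [Submodule.coe_sum, Submodule.coe_smul, Submodule.coe_zero, u,
    Submodule.coe_orthogonalProjectionOnto_apply] using congrArg Subtype.val hbal

theorem balancing_length_le {k γ γ' r : ℝ} (hk : 0 < k) (hγ : 2 * k ≤ γ) (hγ' : 0 ≤ γ')
    (hr : 0 ≤ r) :
    (1 + k / (γ - k)) * r + γ' * r * (k / (γ - k) * (1 + k / (γ - k)))
      ≤ (1 + (2 + 4 * γ') * k / γ) * r := by
  have hγk : 0 < γ - k := by linarith
  have hγ0 : 0 < γ := by linarith
  have h1 : k / (γ - k) ≤ 2 * k / γ := by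
    rw [div_le_div_iff₀ hγk hγ0]
    nlinarith
  have h2 : k / (γ - k) * (1 + k / (γ - k)) ≤ 4 * k / γ := by
    rw [show k / (γ - k) * (1 + k / (γ - k)) = k * γ / (γ - k) ^ 2 by field_simp; ring,
      div_le_div_iff₀ (by positivity) hγ0]
    nlinarith [mul_nonneg (mul_nonneg hk.le (sub_nonneg.2 hγ)) (by linarith : 0 ≤ 3 * γ - 2 * k)]
  have h3 := mul_le_mul_of_nonneg_left h2 hγ'
  calc (1 + k / (γ - k)) * r + γ' * r * (k / (γ - k) * (1 + k / (γ - k)))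
      = (1 + k / (γ - k) + γ' * (k / (γ - k) * (1 + k / (γ - k)))) * r := by ring
    _ ≤ (1 + 2 * k / γ + γ' * (4 * k / γ)) * r := by gcongr
    _ = (1 + (2 + 4 * γ') * k / γ) * r := by ring

theorem stmt_17_general (d k T : ℕ) (hk : 1 ≤ k)
    (γ γ' r : ℝ) (hr : 0 < r) (hγ' : 0 < γ') (hγ : 12 * (k : ℝ) ≤ γ)
    (V : Submodule ℝ (EuclideanSpace ℝ (Fin d)))
    (hdim : Module.finrank ℝ Vᗮ = k)
    (K : ℕ → Set (EuclideanSpace ℝ (Fin d))) (hK : ∀ t, Convex ℝ (K t))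
    (C : Set (EuclideanSpace ℝ (Fin d)))
    (hC : C = {y | ‖(V.orthogonalProjectionOnto y : EuclideanSpace ℝ (Fin d))‖ ≤ γ' * r})
    (tildeΩ : Set (EuclideanSpace ℝ (Fin d)))
    (htildeΩ : tildeΩ = {y | y ∈ C ∧ ∃ p : ℕ → EuclideanSpace ℝ (Fin d),
      p T = y ∧ (∀ t ∈ Finset.Icc 1 T, p t ∈ K t ∩ C) ∧
      ∑ t ∈ Finset.Ico 1 T, ‖p t - p (t + 1)‖ ≤ r})
    -- the sphere of radius γ·r in Vᗮ is contained in the projection of tildeΩ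
    (hsphere : ∀ θ : EuclideanSpace ℝ (Fin d), θ ∈ Vᗮ → ‖θ‖ = γ * r →
      ∃ y ∈ tildeΩ, (Vᗮ.orthogonalProjectionOnto y : EuclideanSpace ℝ (Fin d)) = θ) :
    ∃ Y : ℕ → EuclideanSpace ℝ (Fin d),
      (∀ t ∈ Finset.Icc 1 T, Y t ∈ K t ∧ Y t ∈ V) ∧
        ∑ t ∈ Finset.Ico 1 T, ‖Y t - Y (t + 1)‖ ≤ (1 + (2 + 4 * γ') * k / γ) * r := by
  subst hC htildeΩ
  have hk0 : (0 : ℝ) < k := by exact_mod_cast hk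
  let B : OrthonormalBasis (Fin k) ℝ Vᗮ := (stdOrthonormalBasis ℝ Vᗮ).reindex (finCongr hdim)
  have hpaths : ∀ q : Fin k × Bool, ∃ p : ℕ → EuclideanSpace ℝ (Fin d),
      Vᗮ.orthogonalProjectionOnto (p T) = (boolSign q.2 * (γ * r)) • B q.1 ∧
      (∀ t ∈ Icc 1 T, p t ∈ K t ∧ ‖V.starProjection (p t)‖ ≤ γ' * r) ∧
      ∑ t ∈ Ico 1 T, ‖p t - p (t + 1)‖ ≤ r := by
    intro q
    have hθ : ‖(((boolSign q.2 * (γ * r)) • B q.1 : Vᗮ) : EuclideanSpace ℝ (Fin d))‖ = γ * r := by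
      rw [Submodule.norm_coe, norm_smul, B.norm_eq_one, mul_one, Real.norm_eq_abs, abs_mul,
        abs_boolSign, one_mul, abs_of_pos (by nlinarith)]
    obtain ⟨y, ⟨-, p, rfl, hpKC, hp_len⟩, hy⟩ := hsphere _ (Submodule.coe_mem _) hθ
    exact ⟨p, Subtype.ext hy, fun t ht => ⟨(hpKC t ht).1, by simpa using (hpKC t ht).2⟩, hp_len⟩
  choose p hpT hpKC hp_len using hpaths
  obtain ⟨w, hw_nonneg, hw_le, hw_sum, hw_bal, hw_var⟩ :=
    exists_balanced_weights Vᗮ (by omega) B hr (by linarith) hpT hp_len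
  obtain ⟨Y, hY, hY_len⟩ := exists_path_of_balanced_weights V hK
    (div_nonneg (by linarith [div_nonneg hk0.le (by linarith : (0 : ℝ) ≤ γ - k)]) (by positivity))
    (mul_nonneg hγ'.le hr.le) (fun t ht q => (hpKC q t ht).1) (fun t ht q => (hpKC q t ht).2)
    hp_len hw_nonneg hw_le hw_sum hw_bal hw_var
  refine ⟨Y, hY, hY_len.trans (le_of_eq_of_le ?_
    (balancing_length_le hk0 (by linarith) hγ'.le hr.le))⟩
  simp only [Fintype.card_prod, Fintype.card_fin, Fintype.card_bool]
  push_cast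
  field_simp

theorem stmt_17 (d k T : ℕ) (hT : 1 ≤ T) (hk : 1 ≤ k)
    (γ γ' r : ℝ) (hr : 0 < r) (hγ' : 0 < γ') (hγ : 12 * (k : ℝ) ≤ γ)
    (V : Submodule ℝ (EuclideanSpace ℝ (Fin d)))
    (hdim : Module.finrank ℝ Vᗮ = k)
    (K : ℕ → Set (EuclideanSpace ℝ (Fin d))) (hK : ∀ t, Convex ℝ (K t))
    (C : Set (EuclideanSpace ℝ (Fin d)))
    (hC : C = {y | ‖(V.orthogonalProjectionOnto y : EuclideanSpace ℝ (Fin d))‖ ≤ γ' * r})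
    (tildeΩ : Set (EuclideanSpace ℝ (Fin d)))
    (htildeΩ : tildeΩ = {y | y ∈ C ∧ ∃ p : ℕ → EuclideanSpace ℝ (Fin d),
      p T = y ∧ (∀ t ∈ Finset.Icc 1 T, p t ∈ K t ∩ C) ∧
      ∑ t ∈ Finset.Ico 1 T, ‖p t - p (t + 1)‖ ≤ r})
    -- the sphere of radius γ·r in Vᗮ is contained in the projection of tildeΩ
    (hsphere : ∀ θ : EuclideanSpace ℝ (Fin d), θ ∈ Vᗮ → ‖θ‖ = γ * r →
      ∃ y ∈ tildeΩ, (Vᗮ.orthogonalProjectionOnto y : EuclideanSpace ℝ (Fin d)) = θ) :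
    ∃ Y : ℕ → EuclideanSpace ℝ (Fin d),
      (∀ t ∈ Finset.Icc 1 T, Y t ∈ K t ∧ Y t ∈ V) ∧
        ∑ t ∈ Finset.Ico 1 T, ‖Y t - Y (t + 1)‖ ≤ (1 + (2 + 4 * γ') * k / γ) * r :=
  stmt_17_general d k T hk γ γ' r hr hγ' hγ V hdim K hK C hC tildeΩ htildeΩ hsphere
end
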